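/- arXiv:2010.07296 — 3 statements merged into one kernel-verified Lean document; each statement's English description precedes it below -/
import Mathlib

section
/- Let Γ be a self-adjoint unitary on a Hilbert space H and define η_Γ(a) = a₊ + iΓa₋ for a ∈ B(H), where a± are the even and odd parts of a under ad_Γ. Then η_Γ is a *-automorphism of B(H), with inverse given by η_Γ⁻¹(a) = a₊ - iΓa₋. -/
/-- The even part of `a ∈ B(H)` with respect to the grading `ad_Γ`. -/
noncomputable def evenPart {H : Type*} [NormedAddCommGroup H] [InnerProductSpace ℂ H]
    [CompleteSpace H] (Γ a : H →L[ℂ] H) : H →L[ℂ] H :=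
  (2 : ℂ)⁻¹ • (a + Γ * a * Γ)

/-- The odd part of `a ∈ B(H)` with respect to the grading `ad_Γ`. -/
noncomputable def oddPart {H : Type*} [NormedAddCommGroup H] [InnerProductSpace ℂ H]
    [CompleteSpace H] (Γ a : H →L[ℂ] H) : H →L[ℂ] H :=
  (2 : ℂ)⁻¹ • (a - Γ * a * Γ)

/-- The twist map `η_Γ(a) = a₊ + i Γ a₋`. -/
noncomputable def eta {H : Type*} [NormedAddCommGroup H] [InnerProductSpace ℂ H]
    [CompleteSpace H] (Γ a : H →L[ℂ] H) : H →L[ℂ] H :=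
  evenPart Γ a + Complex.I • (Γ * oddPart Γ a)

/-- The map `a ↦ a₊ - i Γ a₋`, which is the inverse of `η_Γ`. -/
noncomputable def etaInv {H : Type*} [NormedAddCommGroup H] [InnerProductSpace ℂ H]
    [CompleteSpace H] (Γ a : H →L[ℂ] H) : H →L[ℂ] H :=
  evenPart Γ a - Complex.I • (Γ * oddPart Γ a)

/-! The twist `η_Γ` is conjugation by the unitary `w = (1 + iΓ)/√2`: indeed
`w a w⋆ = ½ (1 + iΓ) a (1 - iΓ) = a₊ + iΓa₋` once `Γ² = 1` is used, and `w⋆ w = ½ (1 + Γ²) = 1`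
as `Γ` is self-adjoint. So `η_Γ = Ad w` is a `⋆`-automorphism with inverse `Ad w⋆`, which is
`a ↦ a₊ - iΓa₋`. -/

open Complex (I)

section TwistUnitary

variable {A : Type*} [Ring A] [Algebra ℂ A] {Γ : A}

lemma one_add_I_smul_mul_one_sub_I_smul (hunit : Γ * Γ = 1) :
    (1 + I • Γ) * (1 - I • Γ) = (2 : ℂ) • 1 := by
  simp only [mul_sub, add_mul, one_mul, mul_one, smul_mul_smul_comm, Complex.I_mul_I, hunit,
    neg_smul]
  module

lemma one_sub_I_smul_mul_one_add_I_smul (hunit : Γ * Γ = 1) :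
    (1 - I • Γ) * (1 + I • Γ) = (2 : ℂ) • 1 := by
  simp only [mul_add, sub_mul, one_mul, mul_one, smul_mul_smul_comm, Complex.I_mul_I, hunit,
    neg_smul]
  module

variable [StarRing A] [StarModule ℂ A]

lemma star_one_add_I_smul (hsa : star Γ = Γ) : star (1 + I • Γ) = 1 - I • Γ := by
  simp [star_smul, hsa, sub_eq_add_neg]

lemma ofReal_sqrt_two_inv_mul_self : ((√2 : ℝ) : ℂ)⁻¹ * ((√2 : ℝ) : ℂ)⁻¹ = 2⁻¹ := by
  rw [← mul_inv, ← Complex.ofReal_mul, Real.mul_self_sqrt zero_le_two, Complex.ofReal_ofNat]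

variable (Γ) in
noncomputable def twistUnitary (hsa : star Γ = Γ) (hunit : Γ * Γ = 1) : unitary A :=
  ⟨((√2 : ℝ) : ℂ)⁻¹ • (1 + I • Γ), by
    simp only [Unitary.mem_iff, star_smul, star_one_add_I_smul hsa, star_inv₀, Complex.star_def,
      Complex.conj_ofReal, smul_mul_smul_comm, one_add_I_smul_mul_one_sub_I_smul hunit,
      one_sub_I_smul_mul_one_add_I_smul hunit, smul_smul]
    rw [ofReal_sqrt_two_inv_mul_self, inv_mul_cancel₀ two_ne_zero, one_smul, and_self]⟩

lemma twistUnitary_mul_mul_star (hsa : star Γ = Γ) (hunit : Γ * Γ = 1) (a : A) :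
    (twistUnitary Γ hsa hunit : A) * a * star (twistUnitary Γ hsa hunit : A) =
      (2 : ℂ)⁻¹ • ((1 + I • Γ) * a * (1 - I • Γ)) := by
  simp only [twistUnitary, star_smul, star_one_add_I_smul hsa, star_inv₀, Complex.star_def,
    Complex.conj_ofReal, smul_mul_assoc, mul_smul_comm, smul_smul, ofReal_sqrt_two_inv_mul_self]

lemma star_twistUnitary_mul_mul (hsa : star Γ = Γ) (hunit : Γ * Γ = 1) (a : A) :
    star (twistUnitary Γ hsa hunit : A) * a * (twistUnitary Γ hsa hunit : A) =
      (2 : ℂ)⁻¹ • ((1 - I • Γ) * a * (1 + I • Γ)) := by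
  simp only [twistUnitary, star_smul, star_one_add_I_smul hsa, star_inv₀, Complex.star_def,
    Complex.conj_ofReal, smul_mul_assoc, mul_smul_comm, smul_smul, ofReal_sqrt_two_inv_mul_self]

end TwistUnitary

section Twist

variable {H : Type*} [NormedAddCommGroup H] [InnerProductSpace ℂ H] [CompleteSpace H]
  {Γ : H →L[ℂ] H}

lemma eta_eq (hunit : Γ * Γ = 1) (a : H →L[ℂ] H) :
    eta Γ a = (2 : ℂ)⁻¹ • ((1 + I • Γ) * a * (1 - I • Γ)) := by
  have h : Γ * (Γ * a * Γ) = a * Γ := by rw [← mul_assoc, ← mul_assoc, hunit, one_mul]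
  simp only [eta, evenPart, oddPart, add_mul, mul_sub, one_mul, mul_one, smul_mul_assoc,
    mul_smul_comm, smul_smul, smul_add, smul_sub, Complex.I_mul_I, neg_smul, one_smul]
  rw [h]
  module

lemma etaInv_eq (hunit : Γ * Γ = 1) (a : H →L[ℂ] H) :
    etaInv Γ a = (2 : ℂ)⁻¹ • ((1 - I • Γ) * a * (1 + I • Γ)) := by
  have h : Γ * (Γ * a * Γ) = a * Γ := by rw [← mul_assoc, ← mul_assoc, hunit, one_mul]
  simp only [etaInv, evenPart, oddPart, mul_add, mul_sub, sub_mul, one_mul, mul_one,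
    smul_mul_assoc, mul_smul_comm, smul_smul, smul_add, smul_sub, Complex.I_mul_I, neg_smul,
    one_smul, sub_neg_eq_add]
  rw [h]
  module

lemma eta_eq_conjStarAlgAut (hsa : star Γ = Γ) (hunit : Γ * Γ = 1) :
    eta Γ = Unitary.conjStarAlgAut ℂ _ (twistUnitary Γ hsa hunit) := by
  ext1 a
  rw [eta_eq hunit, Unitary.conjStarAlgAut_apply, twistUnitary_mul_mul_star]

lemma etaInv_eq_conjStarAlgAut_symm (hsa : star Γ = Γ) (hunit : Γ * Γ = 1) :
    etaInv Γ = (Unitary.conjStarAlgAut ℂ _ (twistUnitary Γ hsa hunit)).symm := by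
  ext1 a
  rw [etaInv_eq hunit, Unitary.conjStarAlgAut_symm_apply, star_twistUnitary_mul_mul]

end Twist

/-- For a self-adjoint unitary `Γ` on a Hilbert space `H`, the twist map
`η_Γ(a) = a₊ + iΓa₋` is a `*`-automorphism of `B(H)`, with inverse `a ↦ a₊ - iΓa₋`. -/
theorem eta_starAutomorphism {H : Type*} [NormedAddCommGroup H] [InnerProductSpace ℂ H]
    [CompleteSpace H] (Γ : H →L[ℂ] H) (hsa : star Γ = Γ) (hunit : Γ * Γ = 1) :
    (∀ a b : H →L[ℂ] H, eta Γ (a + b) = eta Γ a + eta Γ b) ∧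
    (∀ (c : ℂ) (a : H →L[ℂ] H), eta Γ (c • a) = c • eta Γ a) ∧
    (∀ a b : H →L[ℂ] H, eta Γ (a * b) = eta Γ a * eta Γ b) ∧
    (∀ a : H →L[ℂ] H, eta Γ (star a) = star (eta Γ a)) ∧
    (∀ a : H →L[ℂ] H, etaInv Γ (eta Γ a) = a) ∧
    (∀ a : H →L[ℂ] H, eta Γ (etaInv Γ a) = a) := by
  rw [etaInv_eq_conjStarAlgAut_symm hsa hunit, eta_eq_conjStarAlgAut hsa hunit]
  set φ := Unitary.conjStarAlgAut ℂ (H →L[ℂ] H) (twistUnitary Γ hsa hunit)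
  exact ⟨map_add φ, map_smul φ, map_mul φ, map_star φ, φ.symm_apply_apply, φ.apply_symm_apply⟩
end

section
/- Let A and B be ℤ₂-graded *-algebras with states ω on A and φ on B, and suppose ω is even (ω ∘ α = ω for the grading automorphism α of A). Then the product functional ω × φ on the Fermi tensor product A ⊛ B, defined by (ω × φ)(Σ aⱼ ⊛ bⱼ) = Σ ω(aⱼ)φ(bⱼ), is positive: (ω × φ)(c*c) ≥ 0 for all c ∈ A ⊛ B, where * is the Fermi involution. -/
/-!
Write `c = ∑ i, aᵢ ⊗ bᵢ` with `aᵢ`, `bᵢ` homogeneous of parities `sᵢ`, `tᵢ`. Then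
`(ω × φ)(c* c) = ∑ i j, ε(sᵢ, tᵢ) ε(tᵢ, sⱼ) ω(aᵢ* aⱼ) φ(bᵢ* bⱼ)`. Since `ω` is even, `ω(aᵢ* aⱼ)`
vanishes unless `sᵢ = sⱼ`, and then the two signs cancel. What remains is the sum of all entries
of the Hadamard product of the Gram matrices `[ω(aᵢ* aⱼ)]` and `[φ(bᵢ* bⱼ)]`, both positive
semidefinite, so it is nonnegative by the Schur product theorem.
-/

open scoped TensorProduct ComplexOrder

/-- `a` is homogeneous of parity `s` (`s = true` meaning odd) with respect to the
grading automorphism `θ`. -/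
def IsHomog {A : Type*} [Neg A] (θ : A → A) (a : A) (s : Bool) : Prop :=
  θ a = if s then -a else a

/-- The sign `ε`: `-1` if both arguments are odd, `1` otherwise. -/
def fermiSign (s t : Bool) : ℂ := if s && t then -1 else 1

open Matrix

/-- Over `ℂ` the Hermitian condition is implied by the nonnegativity of the quadratic form. -/
lemma Matrix.posSemidef_of_forall_dotProduct_mulVec_nonneg {n : Type*} [Fintype n]
    {M : Matrix n n ℂ} (hM : ∀ x, 0 ≤ star x ⬝ᵥ (M *ᵥ x)) : M.PosSemidef := by
  classical
  rw [← isPositive_toEuclideanLin_iff, LinearMap.isPositive_iff_complex]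
  intro x
  have hx := hM x
  have hreal := (IsSelfAdjoint.of_nonneg hx).star_eq
  simp only [EuclideanSpace.inner_eq_star_dotProduct, Matrix.ofLp_toLpLin, Matrix.toLin'_apply]
  rw [dotProduct_comm, ← star_star x.ofLp, star_dotProduct_star, star_star, hreal]
  exact ⟨Complex.conj_eq_iff_re.mp hreal, (Complex.nonneg_iff.mp hx).1⟩

section Gram

variable {A ι : Type*} [NonUnitalNonAssocSemiring A] [StarRing A] [Module ℂ A] [StarModule ℂ A]
  [IsScalarTower ℂ A A] [SMulCommClass ℂ A A] [Fintype ι]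

def functionalGram (φ : A →ₗ[ℂ] ℂ) (b : ι → A) : Matrix ι ι ℂ :=
  Matrix.of fun i j => φ (star (b i) * b j)

lemma star_dotProduct_functionalGram_mulVec (φ : A →ₗ[ℂ] ℂ) (b : ι → A) (x : ι → ℂ) :
    star x ⬝ᵥ (functionalGram φ b *ᵥ x) = φ (star (∑ i, x i • b i) * ∑ j, x j • b j) := by
  rw [star_sum, Finset.sum_mul_sum]
  simp only [dotProduct, mulVec, functionalGram, of_apply, star_smul, Finset.mul_sum,
    smul_mul_assoc, mul_smul_comm, map_sum, map_smul, smul_eq_mul, Pi.star_apply]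
  exact Finset.sum_congr rfl fun i _ => Finset.sum_congr rfl fun j _ => by ring

lemma posSemidef_functionalGram {φ : A →ₗ[ℂ] ℂ} (hφ : ∀ a, 0 ≤ φ (star a * a)) (b : ι → A) :
    (functionalGram φ b).PosSemidef :=
  posSemidef_of_forall_dotProduct_mulVec_nonneg fun x => by
    rw [star_dotProduct_functionalGram_mulVec]
    exact hφ _

end Gram

lemma sum_sum_map_star_mul_mul_map_star_mul_nonneg {A B ι : Type*}
    [NonUnitalNonAssocSemiring A] [StarRing A] [Module ℂ A] [StarModule ℂ A]
    [IsScalarTower ℂ A A] [SMulCommClass ℂ A A]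
    [NonUnitalNonAssocSemiring B] [StarRing B] [Module ℂ B] [StarModule ℂ B]
    [IsScalarTower ℂ B B] [SMulCommClass ℂ B B] [Fintype ι]
    {ω : A →ₗ[ℂ] ℂ} {φ : B →ₗ[ℂ] ℂ}
    (hω : ∀ a, 0 ≤ ω (star a * a)) (hφ : ∀ b, 0 ≤ φ (star b * b)) (a : ι → A) (b : ι → B) :
    0 ≤ ∑ i, ∑ j, ω (star (a i) * a j) * φ (star (b i) * b j) := by
  have := ((posSemidef_functionalGram hω a).hadamard
    (posSemidef_functionalGram hφ b)).dotProduct_mulVec_nonneg 1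
  simpa [dotProduct, mulVec, functionalGram] using this

namespace IsHomog

lemma smul {R A F : Type*} [Semiring R] [AddCommGroup A] [Module R A] [FunLike F A A]
    [LinearMapClass F R A A] {θ : F} {a : A} {s : Bool} (h : IsHomog θ a s) (c : R) :
    IsHomog θ (c • a) s := by
  cases s <;> simp_all [IsHomog, smul_neg]

lemma star {A : Type*} [AddGroup A] [StarAddMonoid A] {θ : A → A}
    (hθ : ∀ a, θ (star a) = star (θ a)) {a : A} {s : Bool} (h : IsHomog θ a s) :
    IsHomog θ (star a) s := by
  cases s <;> simp_all [IsHomog]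

lemma mul {A F : Type*} [NonUnitalNonAssocRing A] [FunLike F A A] [MulHomClass F A A] {θ : F}
    {a b : A} {s t : Bool} (ha : IsHomog θ a s) (hb : IsHomog θ b t) :
    IsHomog θ (a * b) (s ^^ t) := by
  cases s <;> cases t <;> simp_all [IsHomog]

lemma map_odd_eq_zero {R A : Type*} [Field R] [CharZero R] [AddCommGroup A] [Module R A]
    {θ : A → A} {ω : A →ₗ[R] R}
    (hω : ∀ a, ω (θ a) = ω a) {a : A} (h : IsHomog θ a true) : ω a = 0 := by
  have := hω a
  rw [h, if_pos rfl, map_neg] at this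
  exact CharZero.neg_eq_self_iff.mp this

end IsHomog

lemma exists_isHomog_add {R A F : Type*} [Field R] [CharZero R] [AddCommGroup A] [Module R A]
    [FunLike F A A] [LinearMapClass F R A A] (θ : F) (hθ : ∀ a, θ (θ a) = a) (a : A) :
    ∃ a₀ a₁ : A, IsHomog θ a₀ false ∧ IsHomog θ a₁ true ∧ a = a₀ + a₁ := by
  refine ⟨(2⁻¹ : R) • (a + θ a), (2⁻¹ : R) • (a - θ a), ?_, ?_, ?_⟩
  · simp [IsHomog, hθ, add_comm]
  · simp [IsHomog, hθ, ← smul_neg]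
  · rw [← smul_add, add_add_sub_cancel, ← two_smul R, smul_smul, inv_mul_cancel₀ two_ne_zero,
      one_smul]

lemma exists_sum_tmul_isHomog {R A B F G : Type*} [Field R] [CharZero R]
    [AddCommGroup A] [Module R A] [AddCommGroup B] [Module R B]
    [FunLike F A A] [LinearMapClass F R A A] [FunLike G B B] [LinearMapClass G R B B]
    (θA : F) (θB : G) (hθA : ∀ a, θA (θA a) = a) (hθB : ∀ b, θB (θB b) = b) (c : A ⊗[R] B) :
    ∃ (n : ℕ) (a : Fin n → A) (b : Fin n → B) (s t : Fin n → Bool),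
      (∀ i, IsHomog θA (a i) (s i)) ∧ (∀ i, IsHomog θB (b i) (t i)) ∧
      c = ∑ i, a i ⊗ₜ[R] b i := by
  set S := {x : A ⊗[R] B | ∃ a b s t, IsHomog θA a s ∧ IsHomog θB b t ∧ a ⊗ₜ[R] b = x}
  have hS : Submodule.span R S = ⊤ := by
    refine eq_top_iff.2 (TensorProduct.span_tmul_eq_top R A B ▸ Submodule.span_le.2 ?_)
    rintro _ ⟨a, b, rfl⟩
    obtain ⟨a₀, a₁, ha₀, ha₁, rfl⟩ := exists_isHomog_add (R := R) θA hθA a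
    obtain ⟨b₀, b₁, hb₀, hb₁, rfl⟩ := exists_isHomog_add (R := R) θB hθB b
    have mem : ∀ {a b s t}, IsHomog θA a s → IsHomog θB b t → a ⊗ₜ[R] b ∈ Submodule.span R S :=
      fun ha hb => Submodule.subset_span ⟨_, _, _, _, ha, hb, rfl⟩
    rw [TensorProduct.add_tmul, TensorProduct.tmul_add, TensorProduct.tmul_add]
    exact add_mem (add_mem (mem ha₀ hb₀) (mem ha₀ hb₁)) (add_mem (mem ha₁ hb₀) (mem ha₁ hb₁))
  have hc : c ∈ Submodule.span R S := hS ▸ Submodule.mem_top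
  obtain ⟨n, f, g, hsum⟩ := Submodule.mem_span_set'.1 hc
  choose a b s t ha hb hab using fun i => (g i).2
  exact ⟨n, fun i => f i • a i, b, s, t, fun i => (ha i).smul _, hb,
    by simp [← hsum, ← hab, TensorProduct.smul_tmul']⟩

lemma fermiSign_mul_fermiSign_swap (s t : Bool) : fermiSign s t * fermiSign t s = 1 := by
  cases s <;> cases t <;> norm_num [fermiSign]

def productFunctional {A B : Type*} [AddCommMonoid A] [Module ℂ A] [AddCommMonoid B]
    [Module ℂ B] (ω : A →ₗ[ℂ] ℂ) (φ : B →ₗ[ℂ] ℂ) : A ⊗[ℂ] B →ₗ[ℂ] ℂ :=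
  TensorProduct.lift ((LinearMap.mul ℂ ℂ).compl₁₂ ω φ)

@[simp]
lemma productFunctional_tmul {A B : Type*} [AddCommMonoid A] [Module ℂ A] [AddCommMonoid B]
    [Module ℂ B] (ω : A →ₗ[ℂ] ℂ) (φ : B →ₗ[ℂ] ℂ) (a : A) (b : B) :
    productFunctional ω φ (a ⊗ₜ b) = ω a * φ b :=
  rfl

lemma productFunctional_fermiMul_fermiStar_sum_tmul {A B ι : Type*}
    [Ring A] [StarRing A] [Algebra ℂ A] [Ring B] [StarRing B] [Algebra ℂ B] [Fintype ι]
    {θA : A →ₐ[ℂ] A} {θB : B →ₐ[ℂ] B}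
    (hθAstar : ∀ a, θA (star a) = star (θA a)) (hθBstar : ∀ b, θB (star b) = star (θB b))
    {mul : (A ⊗[ℂ] B) →ₗ[ℂ] (A ⊗[ℂ] B) →ₗ[ℂ] (A ⊗[ℂ] B)} {st : (A ⊗[ℂ] B) → (A ⊗[ℂ] B)}
    (hmul : ∀ (a a' : A) (b b' : B) (sa sb sa' sb' : Bool),
      IsHomog θA a sa → IsHomog θB b sb → IsHomog θA a' sa' → IsHomog θB b' sb' →
      mul (a ⊗ₜ[ℂ] b) (a' ⊗ₜ[ℂ] b') = fermiSign sb sa' • ((a * a') ⊗ₜ[ℂ] (b * b')))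
    (hst : ∀ (a : A) (b : B) (sa sb : Bool), IsHomog θA a sa → IsHomog θB b sb →
      st (a ⊗ₜ[ℂ] b) = fermiSign sa sb • (star a ⊗ₜ[ℂ] star b))
    (hstadd : ∀ x y : A ⊗[ℂ] B, st (x + y) = st x + st y)
    {ω : A →ₗ[ℂ] ℂ} (φ : B →ₗ[ℂ] ℂ) (hωeven : ∀ a : A, ω (θA a) = ω a)
    {a : ι → A} {b : ι → B} {s t : ι → Bool}
    (ha : ∀ i, IsHomog θA (a i) (s i)) (hb : ∀ i, IsHomog θB (b i) (t i)) :
    productFunctional ω φ (mul (st (∑ i, a i ⊗ₜ b i)) (∑ i, a i ⊗ₜ b i))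
      = ∑ i, ∑ j, ω (star (a i) * a j) * φ (star (b i) * b j) := by
  have hst_sum :
      st (∑ i, a i ⊗ₜ b i) = ∑ i, fermiSign (s i) (t i) • (star (a i) ⊗ₜ star (b i)) :=
    (map_sum (AddMonoidHom.mk' st hstadd) _ _).trans
      (Finset.sum_congr rfl fun i _ => hst _ _ _ _ (ha i) (hb i))
  have hsign : ∀ i j, fermiSign (s i) (t i) * fermiSign (t i) (s j) * ω (star (a i) * a j)
      = ω (star (a i) * a j) := by
    intro i j
    by_cases hs : s i = s j
    · rw [← hs, fermiSign_mul_fermiSign_swap, one_mul]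
    · have hodd := ((ha i).star hθAstar).mul (ha j)
      rw [Bool.xor_iff_ne.mpr hs] at hodd
      rw [hodd.map_odd_eq_zero hωeven, mul_zero]
  simp only [hst_sum, map_sum, LinearMap.sum_apply, map_smul, LinearMap.smul_apply]
  rw [Finset.sum_comm]
  refine Finset.sum_congr rfl fun i _ => Finset.sum_congr rfl fun j _ => ?_
  rw [hmul _ _ _ _ _ _ _ _ ((ha i).star hθAstar) ((hb i).star hθBstar) (ha j) (hb j), map_smul,
    productFunctional_tmul, smul_eq_mul, smul_eq_mul, ← mul_assoc, ← mul_assoc, hsign]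

theorem productState_positive_general
    {A B : Type*} [Ring A] [StarRing A] [Algebra ℂ A] [StarModule ℂ A]
    [Ring B] [StarRing B] [Algebra ℂ B] [StarModule ℂ B]
    (θA : A →ₐ[ℂ] A) (θB : B →ₐ[ℂ] B)
    (hθAstar : ∀ a, θA (star a) = star (θA a)) (hθBstar : ∀ b, θB (star b) = star (θB b))
    (hθAinv : ∀ a, θA (θA a) = a) (hθBinv : ∀ b, θB (θB b) = b)
    -- the Fermi product and involution on `A ⊗ B`
    (mul : (A ⊗[ℂ] B) →ₗ[ℂ] (A ⊗[ℂ] B) →ₗ[ℂ] (A ⊗[ℂ] B))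
    (st : (A ⊗[ℂ] B) → (A ⊗[ℂ] B))
    (hmul : ∀ (a a' : A) (b b' : B) (sa sb sa' sb' : Bool),
      IsHomog θA a sa → IsHomog θB b sb → IsHomog θA a' sa' → IsHomog θB b' sb' →
      mul (a ⊗ₜ[ℂ] b) (a' ⊗ₜ[ℂ] b') = fermiSign sb sa' • ((a * a') ⊗ₜ[ℂ] (b * b')))
    (hst : ∀ (a : A) (b : B) (sa sb : Bool), IsHomog θA a sa → IsHomog θB b sb →
      st (a ⊗ₜ[ℂ] b) = fermiSign sa sb • (star a ⊗ₜ[ℂ] star b))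
    (hstadd : ∀ x y : A ⊗[ℂ] B, st (x + y) = st x + st y)
    -- the states
    (ω : A →ₗ[ℂ] ℂ) (φ : B →ₗ[ℂ] ℂ)
    (hωpos : ∀ a : A, 0 ≤ ω (star a * a)) (hφpos : ∀ b : B, 0 ≤ φ (star b * b))
    (hωeven : ∀ a : A, ω (θA a) = ω a) :
    ∀ c : A ⊗[ℂ] B,
      0 ≤ TensorProduct.lift ((LinearMap.mul ℂ ℂ).compl₁₂ ω φ) (mul (st c) c) := by
  intro c
  obtain ⟨n, a, b, s, t, ha, hb, rfl⟩ := exists_sum_tmul_isHomog θA θB hθAinv hθBinv c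
  change 0 ≤ productFunctional ω φ _
  rw [productFunctional_fermiMul_fermiStar_sum_tmul hθAstar hθBstar hmul hst hstadd φ hωeven ha hb]
  exact sum_sum_map_star_mul_mul_map_star_mul_nonneg hωpos hφpos a b

/-- If `ω` is an even state on the `ℤ₂`-graded `*`-algebra `A` and `φ` a state on `B`,
then the product functional `ω × φ` is positive on the Fermi tensor product `A ⊛ B`:
`(ω × φ)(c* c) ≥ 0` for all `c`, where `*` is the Fermi involution. -/
theorem productState_positive
    {A B : Type*} [Ring A] [StarRing A] [Algebra ℂ A] [StarModule ℂ A]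
    [Ring B] [StarRing B] [Algebra ℂ B] [StarModule ℂ B]
    (θA : A →ₐ[ℂ] A) (θB : B →ₐ[ℂ] B)
    (hθAstar : ∀ a, θA (star a) = star (θA a)) (hθBstar : ∀ b, θB (star b) = star (θB b))
    (hθAinv : ∀ a, θA (θA a) = a) (hθBinv : ∀ b, θB (θB b) = b)
    -- the Fermi product and involution on `A ⊗ B`
    (mul : (A ⊗[ℂ] B) →ₗ[ℂ] (A ⊗[ℂ] B) →ₗ[ℂ] (A ⊗[ℂ] B))
    (st : (A ⊗[ℂ] B) → (A ⊗[ℂ] B))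
    (hmul : ∀ (a a' : A) (b b' : B) (sa sb sa' sb' : Bool),
      IsHomog θA a sa → IsHomog θB b sb → IsHomog θA a' sa' → IsHomog θB b' sb' →
      mul (a ⊗ₜ[ℂ] b) (a' ⊗ₜ[ℂ] b') = fermiSign sb sa' • ((a * a') ⊗ₜ[ℂ] (b * b')))
    (hst : ∀ (a : A) (b : B) (sa sb : Bool), IsHomog θA a sa → IsHomog θB b sb →
      st (a ⊗ₜ[ℂ] b) = fermiSign sa sb • (star a ⊗ₜ[ℂ] star b))
    (hstadd : ∀ x y : A ⊗[ℂ] B, st (x + y) = st x + st y)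
    (hstsmul : ∀ (c : ℂ) (x : A ⊗[ℂ] B), st (c • x) = starRingEnd ℂ c • st x)
    -- the states
    (ω : A →ₗ[ℂ] ℂ) (φ : B →ₗ[ℂ] ℂ)
    (hωpos : ∀ a : A, 0 ≤ ω (star a * a)) (hφpos : ∀ b : B, 0 ≤ φ (star b * b))
    (hωone : ω 1 = 1) (hφone : φ 1 = 1)
    (hωeven : ∀ a : A, ω (θA a) = ω a) :
    ∀ c : A ⊗[ℂ] B,
      0 ≤ TensorProduct.lift ((LinearMap.mul ℂ ℂ).compl₁₂ ω φ) (mul (st c) c) :=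
  productState_positive_general θA θB hθAstar hθBstar hθAinv hθBinv mul st hmul hst hstadd ω φ hωpos
    hφpos hωeven
end

section
/- With the notation of the twisted dual: if additionally Ψ is unital (Ψ(1) = 1), then μ^⁇ ∘ Ψ^⁇ = ν^⁇, where μ^⁇ and ν^⁇ are the restrictions of the vector states to the twisted commutants; moreover Ψ^⁇ is faithful when it is positive, i.e. Ψ^⁇(b*b) = 0 implies b = 0 for b ∈ N^⁇. -/
/-- The Klein transformation `κ_Γ(a) = a₊ + Γ a₋`. -/
noncomputable def klein {H : Type*} [NormedAddCommGroup H] [InnerProductSpace ℂ H]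
    [CompleteSpace H] (Γ a : H →L[ℂ] H) : H →L[ℂ] H :=
  evenPart Γ a + Γ * oddPart Γ a

/-! Evaluating the duality relation at `a = 1` gives `μ^⁇ ∘ Ψ^⁇ = ν^⁇`. For faithfulness, note
that `N^⁇ = κ(N')` is closed under `b ↦ b* b`, because `κ(x)* = κ(Γ x* Γ)` and
`κ(x) κ(y) = κ(x₊ y + x₋ Γ y Γ)`, with `N'` stable under conjugation by `Γ`. Hence
`Ψ^⁇(b* b) = 0` gives `‖b ξ_ν‖² = ν^⁇(b* b) = μ^⁇(Ψ^⁇(b* b)) = 0`, and `ξ_ν` separates `N^⁇`. -/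

theorem mul_mul_cancel_left_of_mul_eq_one {R : Type*} [Monoid R] {a b : R} (h : a * b = 1)
    (c : R) : a * (b * c) = c := by
  rw [← mul_assoc, h, one_mul]

section Klein

variable {H : Type*} [NormedAddCommGroup H] [InnerProductSpace ℂ H] [CompleteSpace H]
  {Γ : H →L[ℂ] H}

theorem klein_eq (hΓ : Γ * Γ = 1) (x : H →L[ℂ] H) :
    klein Γ x = (2 : ℂ)⁻¹ • (x + Γ * x * Γ + Γ * x - x * Γ) := by
  simp only [klein, evenPart, oddPart, mul_smul_comm, mul_sub, ← mul_assoc, hΓ, one_mul]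
  module

theorem klein_mul_klein (hΓ : Γ * Γ = 1) (x y : H →L[ℂ] H) :
    klein Γ x * klein Γ y = klein Γ (evenPart Γ x * y + oddPart Γ x * (Γ * y * Γ)) := by
  simp only [klein_eq hΓ, evenPart, oddPart, smul_mul_assoc, mul_smul_comm, mul_add, add_mul,
    mul_sub, sub_mul, smul_add, smul_sub, mul_assoc, mul_mul_cancel_left_of_mul_eq_one hΓ, hΓ,
    mul_one]
  module

theorem star_klein (hsa : star Γ = Γ) (hΓ : Γ * Γ = 1) (x : H →L[ℂ] H) :
    star (klein Γ x) = klein Γ (Γ * star x * Γ) := by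
  simp only [klein_eq hΓ, star_smul, star_add, star_sub, star_mul, hsa, star_inv₀, star_ofNat,
    mul_assoc, mul_mul_cancel_left_of_mul_eq_one hΓ, hΓ, mul_one]
  module

variable {S : StarSubalgebra ℂ (H →L[ℂ] H)}

theorem evenPart_mem (hS : ∀ a ∈ S, Γ * a * Γ ∈ S) {x : H →L[ℂ] H} (hx : x ∈ S) :
    evenPart Γ x ∈ S :=
  S.smul_mem (add_mem hx (hS x hx)) _

theorem oddPart_mem (hS : ∀ a ∈ S, Γ * a * Γ ∈ S) {x : H →L[ℂ] H} (hx : x ∈ S) :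
    oddPart Γ x ∈ S :=
  S.smul_mem (sub_mem hx (hS x hx)) _

theorem star_mul_self_mem_image_klein (hsa : star Γ = Γ) (hΓ : Γ * Γ = 1)
    (hS : ∀ a ∈ S, Γ * a * Γ ∈ S) {b : H →L[ℂ] H} (hb : b ∈ klein Γ '' S) :
    star b * b ∈ klein Γ '' S := by
  obtain ⟨x, hx, rfl⟩ := hb
  have hx' : Γ * star x * Γ ∈ S := hS _ (star_mem hx)
  rw [star_klein hsa hΓ, klein_mul_klein hΓ]
  exact ⟨_, add_mem (mul_mem (evenPart_mem hS hx') hx) (mul_mem (oddPart_mem hS hx') (hS x hx)),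
    rfl⟩

end Klein

section

variable {H : Type*} [NormedAddCommGroup H] [InnerProductSpace ℂ H] [CompleteSpace H]

theorem VonNeumannAlgebra.conj_mem_commutant {N : VonNeumannAlgebra H} {Γ : H →L[ℂ] H}
    (hΓ : Γ * Γ = 1) (hN : ∀ a ∈ N, Γ * a * Γ ∈ N) {y : H →L[ℂ] H} (hy : y ∈ N.commutant) :
    Γ * y * Γ ∈ N.commutant := by
  rw [VonNeumannAlgebra.mem_commutant_iff] at hy ⊢
  intro g hg
  calc g * (Γ * y * Γ) = Γ * ((Γ * g * Γ) * y) * Γ := by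
        simp only [mul_assoc, mul_mul_cancel_left_of_mul_eq_one hΓ]
    _ = Γ * (y * (Γ * g * Γ)) * Γ := by rw [hy _ (hN g hg)]
    _ = Γ * y * Γ * g := by simp only [mul_assoc, hΓ, mul_one]

theorem ContinuousLinearMap.apply_eq_zero_of_inner_star_mul_self_eq_zero {b : H →L[ℂ] H}
    {ξ : H} (h : inner ℂ ((star b * b) ξ) ξ = 0) : b ξ = 0 := by
  change inner ℂ (star b (b ξ)) ξ = 0 at h
  rwa [star_eq_adjoint, adjoint_inner_left, inner_self_eq_zero] at h

end

theorem twistedDual_statePreserving_faithful_general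
    {Hμ Hν : Type*}
    [NormedAddCommGroup Hμ] [InnerProductSpace ℂ Hμ] [CompleteSpace Hμ]
    [NormedAddCommGroup Hν] [InnerProductSpace ℂ Hν] [CompleteSpace Hν]
    (M : VonNeumannAlgebra Hμ) (N : VonNeumannAlgebra Hν)
    (Γν : Hν →L[ℂ] Hν)
    (hνsa : star Γν = Γν) (hνunit : Γν * Γν = 1)
    (hNstab : ∀ b ∈ N, Γν * b * Γν ∈ N)
    (ξμ : Hμ) (ξν : Hν)
    (Ψ : (Hμ →L[ℂ] Hμ) →ₗ[ℂ] (Hν →L[ℂ] Hν))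
    (hΨone : Ψ 1 = 1)
    (Ψw : (Hν →L[ℂ] Hν) → (Hμ →L[ℂ] Hμ))
    (hΨwdual : ∀ a ∈ M, ∀ b ∈ klein Γν '' (N.commutant : Set (Hν →L[ℂ] Hν)),
      @inner ℂ Hμ _ ((Ψw b) (a ξμ)) ξμ = @inner ℂ Hν _ (b ((Ψ a) ξν)) ξν)
    (hsep : ∀ b ∈ klein Γν '' (N.commutant : Set (Hν →L[ℂ] Hν)), b ξν = 0 → b = 0) :
    (∀ b ∈ klein Γν '' (N.commutant : Set (Hν →L[ℂ] Hν)),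
      @inner ℂ Hμ _ ((Ψw b) ξμ) ξμ = @inner ℂ Hν _ (b ξν) ξν) ∧
    (∀ b ∈ klein Γν '' (N.commutant : Set (Hν →L[ℂ] Hν)),
      Ψw (star b * b) = 0 → b = 0) := by
  have statePreserving : ∀ b ∈ klein Γν '' (N.commutant : Set (Hν →L[ℂ] Hν)),
      @inner ℂ Hμ _ ((Ψw b) ξμ) ξμ = @inner ℂ Hν _ (b ξν) ξν := fun b hb => by
    simpa only [hΨone, one_apply_eq_self] using hΨwdual 1 (one_mem M) b hb
  refine ⟨statePreserving, fun b hb hb0 => hsep b hb ?_⟩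
  have hmem : star b * b ∈ klein Γν '' (N.commutant : Set (Hν →L[ℂ] Hν)) :=
    star_mul_self_mem_image_klein (S := N.commutant.toStarSubalgebra) hνsa hνunit
      (fun _ => N.conj_mem_commutant hνunit hNstab) hb
  apply ContinuousLinearMap.apply_eq_zero_of_inner_star_mul_self_eq_zero
  rw [← statePreserving _ hmem, hb0]
  exact inner_zero_left _

/-- If `Ψ` is unital, the twisted dual `Ψ^⁇` (characterized by
`⟨Ψ^⁇(b) a ξ_μ, ξ_μ⟩ = ⟨b Ψ(a) ξ_ν, ξ_ν⟩` on `N^⁇`) satisfies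
`μ^⁇ ∘ Ψ^⁇ = ν^⁇`, and (being positive) is faithful: `Ψ^⁇(b* b) = 0 ⟹ b = 0`. -/
theorem twistedDual_statePreserving_faithful
    {Hμ Hν : Type*}
    [NormedAddCommGroup Hμ] [InnerProductSpace ℂ Hμ] [CompleteSpace Hμ]
    [NormedAddCommGroup Hν] [InnerProductSpace ℂ Hν] [CompleteSpace Hν]
    (M : VonNeumannAlgebra Hμ) (N : VonNeumannAlgebra Hν)
    (Γμ : Hμ →L[ℂ] Hμ) (Γν : Hν →L[ℂ] Hν)
    (hμsa : star Γμ = Γμ) (hμunit : Γμ * Γμ = 1)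
    (hνsa : star Γν = Γν) (hνunit : Γν * Γν = 1)
    (hMstab : ∀ a ∈ M, Γμ * a * Γμ ∈ M) (hNstab : ∀ b ∈ N, Γν * b * Γν ∈ N)
    (ξμ : Hμ) (ξν : Hν) (hξμfix : Γμ ξμ = ξμ) (hξνfix : Γν ξν = ξν)
    (Ψ : (Hμ →L[ℂ] Hμ) →ₗ[ℂ] (Hν →L[ℂ] Hν))
    (hΨmem : ∀ a ∈ M, Ψ a ∈ N)
    (hΨone : Ψ 1 = 1)
    (Ψw : (Hν →L[ℂ] Hν) → (Hμ →L[ℂ] Hμ))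
    (hΨwmem : ∀ b ∈ klein Γν '' (N.commutant : Set (Hν →L[ℂ] Hν)),
      Ψw b ∈ klein Γμ '' (M.commutant : Set (Hμ →L[ℂ] Hμ)))
    (hΨwdual : ∀ a ∈ M, ∀ b ∈ klein Γν '' (N.commutant : Set (Hν →L[ℂ] Hν)),
      @inner ℂ Hμ _ ((Ψw b) (a ξμ)) ξμ = @inner ℂ Hν _ (b ((Ψ a) ξν)) ξν)
    (hΨwpos : ∀ b : Hν →L[ℂ] Hν, b.IsPositive → (Ψw b).IsPositive)
    (hsep : ∀ b ∈ klein Γν '' (N.commutant : Set (Hν →L[ℂ] Hν)), b ξν = 0 → b = 0) :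
    (∀ b ∈ klein Γν '' (N.commutant : Set (Hν →L[ℂ] Hν)),
      @inner ℂ Hμ _ ((Ψw b) ξμ) ξμ = @inner ℂ Hν _ (b ξν) ξν) ∧
    (∀ b ∈ klein Γν '' (N.commutant : Set (Hν →L[ℂ] Hν)),
      Ψw (star b * b) = 0 → b = 0) :=
  twistedDual_statePreserving_faithful_general M N Γν hνsa hνunit hNstab ξμ ξν Ψ hΨone Ψw hΨwdual
    hsep
end
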